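/- arXiv:1301.7148 — 2 statements merged into one kernel-verified Lean document; each statement's English description precedes it below -/
import Mathlib

section
/- Let I be an index set whose cardinality is at most that of the continuum, and let (μ_α)_{α ∈ I} be a family of Borel probability measures on ℝ. Then there exist probability spaces (Ω_α, F_α, P_α), uniformly distributed random variables X_α : Ω_α → [0,1], and a single function h : [0,1] → ℝ such that for every α ∈ I the composition h ∘ X_α is measurable and its law (the pushforward of P_α under h ∘ X_α) equals μ_α. -/
open MeasureTheory Set

/-- `X : Ω → ℝ` is a uniformly distributed random variable with values in `[0,1]`:
it is measurable, takes values in `[0,1]`, and its law is Lebesgue measure on `[0,1]`. -/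
def IsUniformOn01 {Ω : Type*} [MeasurableSpace Ω] (P : Measure Ω) (X : Ω → ℝ) : Prop :=
  Measurable X ∧ Set.range X ⊆ Set.Icc 0 1 ∧
    P.map X = volume.restrict (Set.Icc (0 : ℝ) 1)

/-!
Transfinite recursion of length `𝔠` over all pairs (uncountable closed set `K`, index `α`)
splits `ℝ` into disjoint sets `B α` each meeting every uncountable closed set (generalized
Bernstein sets). Since closed sets of positive measure are uncountable, `B α ∩ [0,1]` has full
outer measure in `[0,1]`, so the trace of Lebesgue measure on it makes the inclusion uniformly
distributed. With `g α` a measurable map pushing the uniform law to `μ α`, the function `h`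
equal to `g α` on `B α` satisfies `h ∘ X α = g α ∘ X α`, because the `B α` are disjoint.
-/

open Cardinal Function MeasurableSpace
open TopologicalSpace (countableBasis countable_countableBasis eq_generateFrom_countableBasis)
open scoped ENNReal

universe u

namespace MeasureTheory.Measure

variable {α : Type*} [MeasurableSpace α]

/-- Unlike `Measure.comap Subtype.val μ`, which is `0` unless `A` is null-measurable, the trace
gives `Subtype.val ⁻¹' B` the mass `μ (B ∩ A)` for every set `A`. -/
noncomputable def trace (μ : Measure α) (A : Set α) : Measure A :=
  (μ.toOuterMeasure.comap Subtype.val).toMeasure <| by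
    rintro _ ⟨B, hB, rfl⟩
    refine (OuterMeasure.isCaratheodory_iff _).2 fun t => ?_
    simp only [OuterMeasure.comap_apply, Measure.toOuterMeasure_apply,
      image_inter_preimage, image_sdiff_preimage, measure_inter_add_sdiff _ hB]

theorem trace_apply (μ : Measure α) (A : Set α) {s : Set A} (hs : MeasurableSet s) :
    μ.trace A s = μ (Subtype.val '' s) := by
  simp [trace, toMeasure_apply _ _ hs, OuterMeasure.comap_apply]

theorem map_subtype_val_trace (μ : Measure α) (A : Set α) :
    (μ.trace A).map Subtype.val = μ.restrict A := by
  ext B hB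
  rw [map_apply measurable_subtype_coe hB, trace_apply _ _ (measurable_subtype_coe hB),
    image_preimage_eq_inter_range, Subtype.range_val, restrict_apply hB]

theorem trace_univ (μ : Measure α) (A : Set α) : μ.trace A univ = μ A := by
  rw [← preimage_univ (f := (Subtype.val : A → α)),
    ← map_apply measurable_subtype_coe MeasurableSet.univ, map_subtype_val_trace,
    restrict_apply_univ]

theorem restrict_eq_restrict_of_subset_of_measure_eq {μ : Measure α} {A S : Set α}
    (hAS : A ⊆ S) (hS : MeasurableSet S) (hμ : μ A = μ S) (hS_fin : μ S ≠ ∞) :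
    μ.restrict A = μ.restrict S := by
  have hA_fin : μ A ≠ ∞ := hμ ▸ hS_fin
  calc μ.restrict A = (μ.restrict (toMeasurable μ A)).restrict S := by
        rw [restrict_toMeasurable hA_fin, restrict_restrict hS, inter_eq_right.2 hAS]
    _ = μ.restrict (S ∩ toMeasurable μ A) := restrict_restrict hS
    _ = μ.restrict S := by
        refine restrict_congr_set (ae_eq_of_subset_of_measure_ge inter_subset_left ?_
          (hS.inter (measurableSet_toMeasurable μ A)).nullMeasurableSet hS_fin)
        calc μ S = μ A := hμ.symm
          _ ≤ μ (S ∩ toMeasurable μ A) :=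
            measure_mono (subset_inter hAS (subset_toMeasurable μ A))

theorem measure_eq_of_forall_isCompact_inter_nonempty [TopologicalSpace α] {μ : Measure α}
    [InnerRegularCompactLTTop μ] {A S : Set α} (hAS : A ⊆ S) (hS : MeasurableSet S)
    (hS_fin : μ S ≠ ∞) (hA : ∀ K ⊆ S, IsCompact K → 0 < μ K → (K ∩ A).Nonempty) :
    μ A = μ S := by
  refine (measure_mono hAS).antisymm (not_lt.1 fun hlt => ?_)
  set T := toMeasurable μ A
  have hT : MeasurableSet T := measurableSet_toMeasurable μ A
  have hgap : 0 < μ (S \ T) := by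
    refine pos_iff_ne_zero.2 fun h0 => hlt.not_ge ?_
    calc μ S = μ (S ∩ T) + μ (S \ T) := (measure_inter_add_sdiff S hT).symm
      _ ≤ μ A := by
        rw [h0, add_zero, ← measure_toMeasurable A]
        exact measure_mono inter_subset_right
  obtain ⟨K, hKST, hK, hKpos⟩ := (hS.diff hT).exists_lt_isCompact_of_ne_top
    (ne_top_of_le_ne_top hS_fin (measure_mono sdiff_subset)) hgap
  obtain ⟨x, hxK, hxA⟩ := hA K (hKST.trans sdiff_subset) hK hKpos
  exact (hKST hxK).2 (subset_toMeasurable μ A hxA)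

end MeasureTheory.Measure

theorem exists_pairwise_disjoint_forall_inter_nonempty {X ι J : Type u} {κ : Cardinal.{u}}
    (hκ : ℵ₀ ≤ κ) (hι : #ι ≤ κ) (hJ : #J ≤ κ) (K : J → Set X) (hK : ∀ j, κ ≤ #(K j)) :
    ∃ A : ι → Set X, Pairwise (Disjoint on A) ∧ ∀ i j, (A i ∩ K j).Nonempty := by
  obtain ⟨e⟩ : Nonempty (J × ι ↪ κ.ord.ToType) := by
    rw [← Cardinal.le_def, mk_ord_toType, mk_prod, lift_id, lift_id]
    exact (mul_le_mul' hJ hι).trans (mul_eq_self hκ).le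
  -- Enumerate the pairs `(j, i)` in order type at most `κ` and pick, for each pair in turn,
  -- a point of `K j` not chosen before: fewer than `κ` points have been used up.
  let r : J × ι → J × ι → Prop := InvImage (· < ·) e
  have hIio : ∀ i : κ.ord.ToType, #(Iio i) < κ := fun i => by simpa using mk_Iio_lt i
  have hfresh : ∀ p (prev : ∀ q, r q p → X),
      (K p.1 \ {x | ∃ q hq, prev q hq = x}).Nonempty := by
    refine fun p prev => sdiff_nonempty_of_mk_lt_mk
      (lt_of_le_of_lt ?_ ((hIio (e p)).trans_le (hK p.1)))
    calc #{x | ∃ q hq, prev q hq = x} ≤ #{q // r q p} :=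
          mk_le_of_surjective (f := fun q => ⟨prev q.1 q.2, q.1, q.2, rfl⟩)
            (by rintro ⟨_, q, hq, rfl⟩; exact ⟨⟨q, hq⟩, rfl⟩)
      _ ≤ #(Iio (e p)) := mk_le_of_injective (f := fun q => ⟨e q.1, q.2⟩)
            (fun q q' h => Subtype.ext (e.injective (congrArg Subtype.val h)))
  let f : J × ι → X := (InvImage.wf e wellFounded_lt).fix fun p prev => (hfresh p prev).some
  have hf : ∀ p, f p ∈ K p.1 ∧ ∀ q, e q < e p → f q ≠ f p := fun p => by
    have h := (hfresh p fun q _ => f q).some_mem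
    rw [← (InvImage.wf e wellFounded_lt).fix_eq (fun p prev => (hfresh p prev).some) p] at h
    exact ⟨h.1, fun q hq hqp => h.2 ⟨q, hq, hqp⟩⟩
  have hf_inj : Function.Injective f := fun p q hpq => by
    by_contra hne
    rcases lt_or_gt_of_ne (e.injective.ne hne) with hlt | hlt
    · exact (hf q).2 p hlt hpq
    · exact (hf p).2 q hlt hpq.symm
  refine ⟨fun i => range fun j => f (j, i), fun i i' hii' => ?_,
    fun i j => ⟨f (j, i), ⟨j, rfl⟩, (hf (j, i)).1⟩⟩
  refine disjoint_left.2 ?_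
  rintro _ ⟨j, rfl⟩ ⟨j', hj'⟩
  exact hii' (congrArg Prod.snd (hf_inj hj')).symm

theorem mk_isClosed_le_continuum {X : Type u} [TopologicalSpace X] [SecondCountableTopology X] :
    #{K : Set X // IsClosed K} ≤ 𝔠 := by
  let := borel X
  have : BorelSpace X := ⟨rfl⟩
  have hB : borel X = generateFrom (countableBasis X) :=
    borel_eq_generateFrom_of_subbasis (eq_generateFrom_countableBasis X)
  calc #{K : Set X // IsClosed K} ≤ #{K | MeasurableSet[generateFrom (countableBasis X)] K} :=
        mk_subtype_mono fun K hK => hB ▸ hK.measurableSet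
    _ ≤ 𝔠 := cardinal_measurableSet_le_continuum
        ((countable_countableBasis X).le_aleph0.trans aleph0_le_continuum)

theorem IsClosed.continuum_le_mk_of_not_countable {X : Type u} [TopologicalSpace X] [PolishSpace X]
    {K : Set X} (hK : IsClosed K) (hK' : ¬K.Countable) : 𝔠 ≤ #K := by
  obtain ⟨f, hfK, -, hf⟩ := hK.exists_nat_bool_injection_of_not_countable hK'
  have := lift_mk_le_lift_mk_of_injective (f := fun x => (⟨f x, hfK (mem_range_self x)⟩ : K))
    fun a b h => hf (congrArg Subtype.val h)
  simpa [two_power_aleph0] using this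

theorem exists_pairwise_disjoint_forall_isClosed_not_countable_inter_nonempty {X ι : Type u}
    [TopologicalSpace X] [PolishSpace X] (hι : #ι ≤ 𝔠) :
    ∃ A : ι → Set X, Pairwise (Disjoint on A) ∧
      ∀ i K, IsClosed K → ¬K.Countable → (A i ∩ K).Nonempty := by
  obtain ⟨A, hA, hAK⟩ := exists_pairwise_disjoint_forall_inter_nonempty aleph0_le_continuum hι
    ((mk_subtype_mono fun K hK => hK.1).trans mk_isClosed_le_continuum)
    (fun K : {K : Set X // IsClosed K ∧ ¬K.Countable} => K.1)
    fun K => K.2.1.continuum_le_mk_of_not_countable K.2.2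
  exact ⟨A, hA, fun i K hK hK' => hAK i ⟨K, hK, hK'⟩⟩

theorem restrict_inter_eq_of_forall_isClosed_not_countable {X : Type*} [TopologicalSpace X]
    [T2Space X] [MeasurableSpace X] {μ : Measure X} [μ.InnerRegularCompactLTTop]
    [NullSingletonClass μ] {B S : Set X} (hB : ∀ K, IsClosed K → ¬K.Countable → (B ∩ K).Nonempty)
    (hS : MeasurableSet S) (hS_fin : μ S ≠ ∞) :
    μ.restrict (B ∩ S) = μ.restrict S := by
  refine Measure.restrict_eq_restrict_of_subset_of_measure_eq inter_subset_right hS ?_ hS_fin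
  refine Measure.measure_eq_of_forall_isCompact_inter_nonempty inter_subset_right hS hS_fin
    fun K hKS hK hKpos => ?_
  obtain ⟨x, hxB, hxK⟩ := hB K hK.isClosed fun hc => hKpos.ne' (hc.measure_zero μ)
  exact ⟨x, hxK, hxB, hKS hxK⟩

theorem exists_measurable_map_restrict_Icc_eq {Y : Type*} [MeasurableSpace Y]
    [StandardBorelSpace Y] [Nonempty Y] (μ : Measure Y) [IsProbabilityMeasure μ] :
    ∃ g : ℝ → Y, Measurable g ∧ (volume.restrict (Icc (0 : ℝ) 1)).map g = μ := by
  obtain ⟨f, hf, hfμ⟩ := μ.exists_measurable_map_eq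
  refine ⟨f ∘ projIcc 0 1 zero_le_one, hf.comp continuous_projIcc.measurable, ?_⟩
  rw [← unitInterval.measurePreserving_coe.map_eq,
    Measure.map_map (hf.comp continuous_projIcc.measurable) measurable_subtype_coe]
  simpa [comp_def] using hfμ

theorem exists_forall_eqOn_of_pairwise_disjoint {ι α β : Type*} [Nonempty β] {A : ι → Set α}
    (hA : Pairwise (Disjoint on A)) (g : ι → α → β) : ∃ h : α → β, ∀ i, EqOn h (g i) (A i) := by
  classical
  refine ⟨fun x => if hx : ∃ i, x ∈ A i then g hx.choose x else Classical.arbitrary β,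
    fun i x hx => ?_⟩
  have hex : ∃ i, x ∈ A i := ⟨i, hx⟩
  have : hex.choose = i := hA.eq (not_disjoint_iff.2 ⟨x, hex.choose_spec, hx⟩)
  simp only [dif_pos hex, this]

theorem isUniformOn01_trace {A : Set ℝ} (hA : A ⊆ Icc 0 1)
    (hA_vol : volume.restrict A = volume.restrict (Icc (0 : ℝ) 1)) :
    IsUniformOn01 (volume.trace A) Subtype.val :=
  ⟨measurable_subtype_coe, by rwa [Subtype.range_val],
    by rw [Measure.map_subtype_val_trace, hA_vol]⟩

theorem isProbabilityMeasure_trace {A : Set ℝ}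
    (hA_vol : volume.restrict A = volume.restrict (Icc (0 : ℝ) 1)) :
    IsProbabilityMeasure (volume.trace A) :=
  ⟨by rw [Measure.trace_univ, ← Measure.restrict_apply_univ, hA_vol]; simp⟩

/-- For an index set `I` of cardinality at most the continuum and a family
of Borel probability measures `μ α` on `ℝ`, there are uniformly distributed random variables
`X α` and a single function `h` on `[0,1]` such that each `h ∘ X α` is measurable with
law `μ α`. -/
theorem stmt_1 (I : Type) (hI : Cardinal.mk I ≤ Cardinal.continuum)
    (μ : I → Measure ℝ) (hμ : ∀ α, IsProbabilityMeasure (μ α)) :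
    ∃ (Ω : I → Type) (_ : ∀ α, MeasurableSpace (Ω α)) (P : ∀ α, Measure (Ω α))
      (X : ∀ α, Ω α → ℝ) (h : ℝ → ℝ),
      ∀ α, IsProbabilityMeasure (P α) ∧ IsUniformOn01 (P α) (X α) ∧
        Measurable (h ∘ X α) ∧ (P α).map (h ∘ X α) = μ α := by
  obtain ⟨B, hB_disj, hB⟩ :=
    exists_pairwise_disjoint_forall_isClosed_not_countable_inter_nonempty (X := ℝ) hI
  have hB_full : ∀ α, volume.restrict (B α ∩ Icc 0 1) = volume.restrict (Icc (0 : ℝ) 1) := fun α =>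
    restrict_inter_eq_of_forall_isClosed_not_countable (hB α) measurableSet_Icc (by simp)
  choose g hg hgμ using fun α => @exists_measurable_map_restrict_Icc_eq ℝ _ _ _ (μ α) (hμ α)
  obtain ⟨h, hh⟩ := exists_forall_eqOn_of_pairwise_disjoint hB_disj g
  refine ⟨fun α => ↥(B α ∩ Icc 0 1), fun _ => inferInstance, fun α => volume.trace _,
    fun _ => Subtype.val, h, fun α => ?_⟩
  have hcomp : h ∘ Subtype.val = g α ∘ (Subtype.val : ↥(B α ∩ Icc 0 1) → ℝ) :=
    funext fun x => hh α x.2.1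
  refine ⟨isProbabilityMeasure_trace (hB_full α), isUniformOn01_trace inter_subset_right (hB_full α),
    hcomp ▸ (hg α).comp measurable_subtype_coe, ?_⟩
  rw [hcomp, ← Measure.map_map (hg α) measurable_subtype_coe, Measure.map_subtype_val_trace, hB_full α,
    hgμ α]
end

section
/- There exists a set M ⊆ ℝ such that neither M nor its complement ℝ \ M contains any Lebesgue measurable subset of positive Lebesgue measure (equivalently, both M and ℝ \ M have Lebesgue inner measure zero), and moreover ℝ \ M = M + 1 = {m + 1 : m ∈ M}. -/
/-!
Choose a `ℚ`-linear functional `f : ℝ → ℚ` with `f 1 = 1` and let `M = {x | ⌊f x⌋ even}`.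
Since `f (x + t) = f x + 1` whenever `f t = 1`, translating by such a `t` swaps `M` and its
complement; in particular neither `M` nor `Mᶜ` contains two points whose difference lies in
`f ⁻¹' {1}`. That fibre is a translate of `ker f`, which is dense because `ℝ` is uncountable
while `ℚ` is countable. By Steinhaus, `T - T` is a neighbourhood of `0` for every measurable `T`
of positive measure, so it meets `f ⁻¹' {1}`, and hence every measurable subset of `M` or `Mᶜ`
is null.
-/

open MeasureTheory Set Pointwise

theorem MeasureTheory.NullMeasurableSet.measure_eq_zero_of_disjoint_sub {G : Type*} [AddGroup G]
    [TopologicalSpace G] [IsTopologicalAddGroup G] [LocallyCompactSpace G] [MeasurableSpace G]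
    [BorelSpace G] {μ : Measure G} [μ.IsAddHaarMeasure] [μ.InnerRegular] {T D : Set G}
    (hT : NullMeasurableSet T μ) (hD : (0 : G) ∈ closure D) (hTD : Disjoint (T - T) D) :
    μ T = 0 := by
  by_contra hpos
  obtain ⟨s, hsT, hs, hsT_ae⟩ := hT.exists_measurable_subset_ae_eq
  have hs_pos : 0 < μ s := by rw [measure_congr hsT_ae]; exact pos_iff_ne_zero.mpr hpos
  obtain ⟨d, hds, hdD⟩ :=
    mem_closure_iff_nhds.mp hD _ (Measure.sub_mem_nhds_zero_of_addHaar_pos μ s hs hs_pos)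
  exact hTD.notMem_of_mem_left (sub_subset_sub hsT hsT hds) hdD

theorem exists_linearMap_rat_apply_one : ∃ f : ℝ →ₗ[ℚ] ℚ, f 1 = 1 := by
  obtain ⟨f, hf⟩ := (Algebra.linearMap ℚ ℝ).exists_leftInverse_of_injective
    (LinearMap.ker_eq_bot.mpr (algebraMap ℚ ℝ).injective)
  exact ⟨f, by simpa using LinearMap.congr_fun hf 1⟩

section CountableCodomain

variable {V : Type*} [AddCommGroup V] [Module ℚ V] [Countable V] (f : ℝ →ₗ[ℚ] V)

theorem LinearMap.dense_ker_of_countable : Dense (LinearMap.ker f : Set ℝ) := by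
  obtain ⟨k, hk, hfk⟩ : ∃ k : ℝ, k ≠ 0 ∧ f k = 0 := by
    by_contra! h
    exact not_countable
      ((injective_iff_map_eq_zero f).mpr fun k hfk => by_contra fun hk => h k hk hfk).countable
  have hdense : DenseRange fun q : ℚ => (q : ℝ) * k :=
    (mul_right_surjective₀ hk).denseRange.comp Rat.denseRange_cast (continuous_mul_const k)
  refine hdense.mono ?_
  rintro _ ⟨q, rfl⟩
  simp [← Rat.smul_def, hfk]

theorem LinearMap.dense_preimage_singleton_of_countable {v : V} (hv : f 1 = v) :
    Dense (f ⁻¹' {v}) := by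
  have hpre : f ⁻¹' {v} = (fun x => x - 1) ⁻¹' (LinearMap.ker f : Set ℝ) := by
    ext x
    simp [sub_eq_zero, hv]
  rw [hpre]
  exact f.dense_ker_of_countable.preimage (Homeomorph.subRight (1 : ℝ)).isOpenMap

end CountableCodomain

section EvenFloor

variable {V : Type*} [AddCommGroup V] [Module ℚ V] (f : V →ₗ[ℚ] ℚ)

def evenFloorSet : Set V := {x | Even ⌊f x⌋}

theorem add_mem_evenFloorSet_iff {x t : V} (ht : f t = 1) :
    x + t ∈ evenFloorSet f ↔ x ∉ evenFloorSet f := by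
  simp [evenFloorSet, ht]

theorem add_mem_compl_evenFloorSet_iff {x t : V} (ht : f t = 1) :
    x + t ∈ (evenFloorSet f)ᶜ ↔ x ∉ (evenFloorSet f)ᶜ := by
  simp [add_mem_evenFloorSet_iff f ht]

theorem compl_evenFloorSet_eq_image_add {t : V} (ht : f t = 1) :
    (evenFloorSet f)ᶜ = (fun x => x + t) '' evenFloorSet f := by
  ext x
  rw [image_add_right, mem_preimage, mem_compl_iff, ← sub_eq_add_neg, not_iff_comm]
  simpa using (add_mem_evenFloorSet_iff f (x := x - t) ht).symm

theorem disjoint_sub_self_preimage_one {A : Set V}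
    (hA : ∀ x t, f t = 1 → (x + t ∈ A ↔ x ∉ A)) : Disjoint (A - A) (f ⁻¹' {1}) := by
  rw [Set.disjoint_left]
  rintro _ ⟨a, ha, b, hb, rfl⟩ hab
  have hswap := hA b (a - b) hab
  rw [add_sub_cancel] at hswap
  exact hswap.mp ha hb

end EvenFloor

/-- There is a set `M ⊆ ℝ` such that neither `M` nor `ℝ \ M` contains a
Lebesgue measurable subset of positive measure (i.e. both have inner measure zero), and
moreover `ℝ \ M = M + 1`. Lebesgue measurable sets are the `volume`-null-measurable sets. -/
theorem stmt_11 :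
    ∃ M : Set ℝ,
      (∀ T ⊆ M, NullMeasurableSet T volume → volume T = 0) ∧
      (∀ T ⊆ Mᶜ, NullMeasurableSet T volume → volume T = 0) ∧
      Mᶜ = (fun m : ℝ => m + 1) '' M := by
  obtain ⟨f, hf⟩ := exists_linearMap_rat_apply_one
  have h0 : (0 : ℝ) ∈ closure (f ⁻¹' {1}) := f.dense_preimage_singleton_of_countable hf 0
  refine ⟨evenFloorSet f, fun T hTM hT => ?_, fun T hTM hT => ?_,
    compl_evenFloorSet_eq_image_add f hf⟩
  · exact hT.measure_eq_zero_of_disjoint_sub h0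
      ((disjoint_sub_self_preimage_one f fun _ _ => add_mem_evenFloorSet_iff f).mono_left
        (sub_subset_sub hTM hTM))
  · exact hT.measure_eq_zero_of_disjoint_sub h0
      ((disjoint_sub_self_preimage_one f fun _ _ => add_mem_compl_evenFloorSet_iff f).mono_left
        (sub_subset_sub hTM hTM))
end
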